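/- Let a Dyck path of length 2m (m ≥ 1) be chosen uniformly at random, let V be the number of visits to 0 (including endpoints), and set W = 2V − 2. Then E[W] = 6m/(m+2). -/
import Mathlib

/-- Height of the path after the first `k` steps (`true` = up-step `+1`,
`false` = down-step `-1`). -/
def pathSum {n : ℕ} (v : Fin n → Bool) (k : ℕ) : ℤ :=
  ∑ i ∈ Finset.univ.filter (fun i : Fin n => (i : ℕ) < k), (if v i then (1:ℤ) else -1)

/-- A Dyck path: ends at `0` and stays nonnegative. -/
def IsDyck {n : ℕ} (v : Fin n → Bool) : Prop :=
  pathSum v n = 0 ∧ ∀ k, k ≤ n → 0 ≤ pathSum v k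

open Classical in
/-- The finite set of all Dyck paths of length `n`. -/
noncomputable def dyckSet (n : ℕ) : Finset (Fin n → Bool) :=
  Finset.univ.filter fun v => IsDyck v

/-- Number of visits to `0` (including the initial and final point). -/
def visits {n : ℕ} (v : Fin n → Bool) : ℕ :=
  ((Finset.range (n + 1)).filter fun k => pathSum v k = 0).card

lemma pathSum_zero {n : ℕ} (v : Fin n → Bool) : pathSum v 0 = 0 := by
  simp [pathSum]

lemma pathSum_succ {n : ℕ} (v : Fin n → Bool) (k : ℕ) (hk : k < n) :
    pathSum v (k + 1) = pathSum v k + (if v ⟨k, hk⟩ then 1 else -1) := by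
  unfold pathSum
  have h : (Finset.univ.filter fun i : Fin n => (i : ℕ) < k + 1)
      = insert ⟨k, hk⟩ (Finset.univ.filter fun i : Fin n => (i : ℕ) < k) := by
    ext i
    simp only [Finset.mem_filter, Finset.mem_univ, true_and, Finset.mem_insert, Fin.ext_iff]
    omega
  rw [h, Finset.sum_insert (by simp)]
  ring

lemma pathSum_of_le {n : ℕ} (v : Fin n → Bool) {k : ℕ} (h : n ≤ k) :
    pathSum v k = pathSum v n := by
  unfold pathSum
  congr 1
  ext i
  simp only [Finset.mem_filter, Finset.mem_univ, true_and]
  exact ⟨fun _ => i.2, fun _ => lt_of_lt_of_le i.2 h⟩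

lemma even_pathSum_add {n : ℕ} (v : Fin n → Bool) (k : ℕ) (hkn : k ≤ n) :
    Even (pathSum v k + k) := by
  induction k with
  | zero => simp [pathSum_zero]
  | succ k ih =>
    have ih := ih (by omega)
    have hk : k < n := by omega
    · rw [pathSum_succ v k hk]
      rcases ih with ⟨c, hc⟩
      by_cases hv : v ⟨k, hk⟩ <;> simp only [hv, if_true, if_false]
      · exact ⟨c + 1, by push_cast; omega⟩
      · exact ⟨c, by push_cast; omega⟩

lemma even_of_pathSum_eq_zero {n : ℕ} (v : Fin n → Bool) {k : ℕ} (hkn : k ≤ n)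
    (h : pathSum v k = 0) : Even k := by
  have := even_pathSum_add v k hkn
  rw [h, zero_add] at this
  rcases this with ⟨c, hc⟩
  rcases Int.le_total 0 c with h0 | h0
  · exact ⟨c.toNat, by omega⟩
  · exact ⟨0, by omega⟩

lemma pathSum_left {a b : ℕ} (v : Fin (a + b) → Bool) {k : ℕ} (hk : k ≤ a) :
    pathSum (fun i : Fin a => v (Fin.castAdd b i)) k = pathSum v k := by
  induction k with
  | zero => rw [pathSum_zero, pathSum_zero]
  | succ k ih =>
    have hka : k < a := by omega
    rw [pathSum_succ _ k hka, pathSum_succ v k (by omega), ih (by omega)]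
    rfl

lemma pathSum_right {a b : ℕ} (v : Fin (a + b) → Bool) {k : ℕ} (hk : k ≤ b) :
    pathSum (fun i : Fin b => v (Fin.natAdd a i)) k = pathSum v (a + k) - pathSum v a := by
  induction k with
  | zero => rw [pathSum_zero]; simp
  | succ k ih =>
    have hkb : k < b := by omega
    rw [pathSum_succ _ k hkb, show a + (k+1) = (a+k) + 1 by omega,
      pathSum_succ v (a+k) (by omega), ih (by omega)]
    have : v (Fin.natAdd a ⟨k, hkb⟩) = v ⟨a + k, by omega⟩ := rfl
    rw [this]; ring

lemma mem_dyckSet {n : ℕ} {v : Fin n → Bool} : v ∈ dyckSet n ↔ IsDyck v := by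
  simp [dyckSet]

lemma card_filter_split (a b : ℕ) :
    ((dyckSet (a + b)).filter (fun v => pathSum v a = 0)).card
      = (dyckSet a).card * (dyckSet b).card := by
  classical
  rw [← Finset.card_product]
  apply Finset.card_bij'
    (i := fun v _ => ((fun i => v (Fin.castAdd b i)), (fun i => v (Fin.natAdd a i))))
    (j := fun p _ => Fin.append p.1 p.2)
  · intro v hv
    rw [Finset.mem_filter] at hv
    obtain ⟨hv, hva⟩ := hv
    rw [mem_dyckSet] at hv
    obtain ⟨hend, hpos⟩ := hv
    rw [Finset.mem_product, mem_dyckSet, mem_dyckSet]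
    refine ⟨⟨?_, fun k hk => ?_⟩, ⟨?_, fun k hk => ?_⟩⟩
    · rw [pathSum_left v le_rfl]; exact hva
    · rw [pathSum_left v hk]; exact hpos k (by omega)
    · rw [pathSum_right v le_rfl, hva]; simpa using hend
    · rw [pathSum_right v hk, hva]; simpa using hpos (a + k) (by omega)
  · intro p hp
    rw [Finset.mem_product, mem_dyckSet, mem_dyckSet] at hp
    obtain ⟨⟨h1e, h1p⟩, ⟨h2e, h2p⟩⟩ := hp
    have hl : ∀ k (hk : k ≤ a), pathSum (Fin.append p.1 p.2) k = pathSum p.1 k := by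
      intro k hk
      rw [← pathSum_left (Fin.append p.1 p.2) hk]
      congr 1
      funext i
      exact Fin.append_left _ _ _
    have hr : ∀ k (hk : k ≤ b),
        pathSum (Fin.append p.1 p.2) (a + k) = pathSum p.2 k := by
      intro k hk
      have := pathSum_right (Fin.append p.1 p.2) hk
      have e2 : (fun i : Fin b => Fin.append p.1 p.2 (Fin.natAdd a i)) = p.2 := by
        funext i; exact Fin.append_right _ _ _
      rw [e2] at this
      rw [hl a le_rfl, h1e] at this
      omega
    rw [Finset.mem_filter, mem_dyckSet]
    refine ⟨⟨?_, fun k hk => ?_⟩, ?_⟩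
    · rw [hr b le_rfl]; exact h2e
    · rcases le_or_gt k a with h | h
      · rw [hl k h]; exact h1p k h
      · rw [show k = a + (k - a) by omega, hr (k - a) (by omega)]
        exact h2p (k - a) (by omega)
    · rw [hl a le_rfl]; exact h1e
  · intro v hv
    exact Fin.append_castAdd_natAdd
  · intro p hp
    ext i
    · exact Fin.append_left _ _ _
    · exact Fin.append_right _ _ _

open DyckStep in
def toSteps {n : ℕ} (v : Fin n → Bool) : List DyckStep :=
  List.ofFn (fun i => if v i then U else D)

open DyckStep List in
lemma toSteps_count {n : ℕ} (v : Fin n → Bool) (k : ℕ) (hk : k ≤ n) :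
    ((((toSteps v).take k).count U : ℤ) - (((toSteps v).take k).count D : ℤ)
        = pathSum v k)
    ∧ (((toSteps v).take k).count U + ((toSteps v).take k).count D = k) := by
  have hlen : (toSteps v).length = n := by simp [toSteps]
  induction k with
  | zero => simp [pathSum_zero]
  | succ k ih =>
    obtain ⟨ih1, ih2⟩ := ih (by omega)
    have hkn : k < n := by omega
    have hget : (toSteps v)[k]? = some (if v ⟨k, hkn⟩ then U else D) := by
      rw [List.getElem?_eq_getElem (by omega)]
      simp [toSteps]
    rw [List.take_succ, hget]
    rw [pathSum_succ v k hkn]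
    simp only [Option.toList_some, count_append, count_singleton]
    constructor
    · by_cases hv : v ⟨k, hkn⟩ <;> simp [hv] <;> push_cast <;> omega
    · by_cases hv : v ⟨k, hkn⟩ <;> simp [hv] <;> omega

open DyckStep List in
noncomputable def toDyckWord {n : ℕ} (v : Fin n → Bool) (hv : IsDyck v) : DyckWord where
  toList := toSteps v
  count_U_eq_count_D := by
    have hlen : (toSteps v).length = n := by simp [toSteps]
    have h := toSteps_count v n le_rfl
    rw [List.take_of_length_le (le_of_eq hlen)] at h
    have := hv.1
    omega
  count_D_le_count_U i := by
    have hlen : (toSteps v).length = n := by simp [toSteps]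
    rcases le_or_gt i n with h | h
    · have h1 := (toSteps_count v i h).1
      have h2 := hv.2 i h
      omega
    · rw [List.take_of_length_le (by omega)]
      have h1 := (toSteps_count v n le_rfl).1
      rw [List.take_of_length_le (le_of_eq hlen)] at h1
      have := hv.1
      omega

open DyckStep List in
lemma card_dyckSet (m : ℕ) : (dyckSet (2 * m)).card = catalan m := by
  classical
  rw [← DyckWord.card_dyckWord_semilength_eq_catalan, ← Finset.card_univ]
  apply Finset.card_bij'
    (i := fun v hv => (⟨toDyckWord v (mem_dyckSet.mp hv), by
      have hlen : (toSteps v).length = 2 * m := by simp [toSteps]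
      have h := toSteps_count v (2 * m) le_rfl
      rw [List.take_of_length_le (le_of_eq hlen)] at h
      have := (mem_dyckSet.mp hv).1
      have : ((toSteps v).count U : ℤ) = m := by omega
      have : (toSteps v).count U = m := by exact_mod_cast this
      simpa [DyckWord.semilength, toDyckWord] using this⟩ :
        {p : DyckWord // p.semilength = m}))
    (j := fun p _ => fun i : Fin (2 * m) =>
      decide ((p : {p : DyckWord // p.semilength = m}).1.toList.getD i U = U))
  case hi => intro v hv; exact Finset.mem_univ _
  case hj =>
    intro p hp
    set l := p.1.toList with hl
    have hlen : l.length = 2 * m := by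
      rw [← p.1.two_mul_semilength_eq_length, p.2]
    set w : Fin (2 * m) → Bool := fun i => decide (l.getD i U = U) with hw
    have hsteps : toSteps w = l := by
      apply List.ext_getElem
      · simp [toSteps, hlen]
      · intro i h1 h2
        have hi : i < 2 * m := by simpa [toSteps] using h1
        simp only [toSteps, List.getElem_ofFn, hw]
        rw [List.getD_eq_getElem l U h2]
        rcases (l[i]).dichotomy with h | h <;> simp [h]
    rw [mem_dyckSet]
    have key : ∀ k, k ≤ 2 * m →
        pathSum w k = ((l.take k).count U : ℤ) - ((l.take k).count D : ℤ) := by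
      intro k hk
      rw [← (toSteps_count w k hk).1, hsteps]
    constructor
    · rw [key (2 * m) le_rfl, List.take_of_length_le (le_of_eq hlen),
        p.1.count_U_eq_count_D]
      ring
    · intro k hk
      rw [key k hk]
      have := p.1.count_D_le_count_U k
      rw [← hl] at this
      omega
  case left_inv =>
    intro v hv
    funext i
    have : (toSteps v).getD i U = (if v i then U else D) := by
      rw [List.getD_eq_getElem _ U (by simpa [toSteps] using i.2)]
      simp [toSteps]
    simp only [toDyckWord, this]
    by_cases hv2 : v i <;> simp [hv2]
  case right_inv =>
    intro p hp
    apply Subtype.ext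
    apply DyckWord.ext
    simp only [toDyckWord]
    apply List.ext_getElem
    · simp [toSteps, ← p.1.two_mul_semilength_eq_length, p.2]
    · intro i h1 h2
      have hi : i < 2 * m := by simpa [toSteps] using h1
      simp only [toSteps, List.getElem_ofFn]
      have hgd : (p.1.toList).getD i U = p.1.toList[i]'h2 := List.getD_eq_getElem _ U h2
      rcases (p.1.toList[i]'h2).dichotomy with h | h <;> simp [hgd, h, List.getElem?_eq_getElem h2]

lemma card_filter_split' {n : ℕ} (a b : ℕ) (h : n = a + b) :
    ((dyckSet n).filter (fun v => pathSum v a = 0)).card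
      = (dyckSet a).card * (dyckSet b).card := by
  subst h; exact card_filter_split a b

lemma sum_visits (m : ℕ) :
    ∑ v ∈ dyckSet (2 * m), visits v = catalan (m + 1) := by
  classical
  have h1 : ∑ v ∈ dyckSet (2 * m), visits v
      = ∑ k ∈ Finset.range (2 * m + 1),
          ((dyckSet (2 * m)).filter fun v => pathSum v k = 0).card := by
    simp_rw [visits, Finset.card_filter]
    exact Finset.sum_comm
  rw [h1]
  set N : ℕ → ℕ := fun k => ((dyckSet (2 * m)).filter fun v => pathSum v k = 0).card
    with hN
  have h2 : ∑ k ∈ Finset.range (2 * m + 1), N k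
      = ∑ j ∈ Finset.range (m + 1), N (2 * j) := by
    have himg : ∑ j ∈ Finset.range (m + 1), N (2 * j)
        = ∑ k ∈ (Finset.range (m + 1)).image (fun j => 2 * j), N k :=
      (Finset.sum_image (by intro x _ y _ hxy; omega)).symm
    rw [himg]
    apply (Finset.sum_subset ?_ ?_).symm
    · intro k hk
      simp only [Finset.mem_image, Finset.mem_range] at hk ⊢
      obtain ⟨j, hj, rfl⟩ := hk
      omega
    · intro k hk hk2
      simp only [Finset.mem_image, Finset.mem_range] at hk hk2
      rw [hN]
      simp only
      rw [Finset.card_eq_zero, Finset.filter_eq_empty_iff]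
      intro v hv
      intro h0
      have hev := even_of_pathSum_eq_zero v (by omega) h0
      obtain ⟨j, rfl⟩ := hev
      exact hk2 ⟨j, by omega, by omega⟩
  rw [h2]
  have h3 : ∀ j ∈ Finset.range (m + 1), N (2 * j) = catalan j * catalan (m - j) := by
    intro j hj
    simp only [Finset.mem_range] at hj
    simp only [hN]
    rw [card_filter_split' (2 * j) (2 * (m - j)) (by omega),
      card_dyckSet, card_dyckSet]
  rw [Finset.sum_congr rfl h3, catalan_succ]
  rw [Finset.sum_range fun i => catalan i * catalan (m - i)]

lemma catalan_ratio (m : ℕ) :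
    (m + 2) * catalan (m + 1) = 2 * (2 * m + 1) * catalan m := by
  apply Nat.eq_of_mul_eq_mul_left (show 0 < m + 1 by omega)
  calc (m + 1) * ((m + 2) * catalan (m + 1))
      = (m + 1) * Nat.centralBinom (m + 1) := by
        rw [succ_mul_catalan_eq_centralBinom (m + 1)]
    _ = 2 * (2 * m + 1) * Nat.centralBinom m := Nat.succ_mul_centralBinom_succ m
    _ = 2 * (2 * m + 1) * ((m + 1) * catalan m) := by
        rw [succ_mul_catalan_eq_centralBinom m]
    _ = (m + 1) * (2 * (2 * m + 1) * catalan m) := by ring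

theorem stmt_8 (m : ℕ) (hm : 1 ≤ m) :
    (∑ v ∈ dyckSet (2*m), (2 * (visits v : ℚ) - 2)) / ((dyckSet (2*m)).card : ℚ)
      = 6*(m:ℚ) / ((m:ℚ) + 2) := by
  have hcard : ((dyckSet (2 * m)).card : ℚ) = (catalan m : ℚ) := by
    exact_mod_cast congrArg (Nat.cast (R := ℚ)) (card_dyckSet m)
  have hpos : (0 : ℚ) < (catalan m : ℚ) := by
    have h := succ_mul_catalan_eq_centralBinom m
    have h2 := Nat.centralBinom_pos m
    have : 0 < catalan m := by by_contra hc; push_neg at hc; interval_cases (catalan m) <;> omega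
    exact_mod_cast this
  have hsum : (∑ v ∈ dyckSet (2*m), (2 * (visits v : ℚ) - 2))
      = 2 * (catalan (m + 1) : ℚ) - 2 * (catalan m : ℚ) := by
    rw [Finset.sum_sub_distrib, ← Finset.mul_sum, Finset.sum_const, ← Nat.cast_sum,
      sum_visits m, nsmul_eq_mul, ← hcard]
    push_cast [card_dyckSet]
    ring
  have hratio : ((m : ℚ) + 2) * (catalan (m + 1) : ℚ)
      = 2 * (2 * (m : ℚ) + 1) * (catalan m : ℚ) := by
    exact_mod_cast congrArg (Nat.cast (R := ℚ)) (catalan_ratio m)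
  rw [hsum, hcard]
  have hm2 : (m : ℚ) + 2 ≠ 0 := by positivity
  field_simp
  linear_combination (2 : ℚ) * hratio
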